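/- Let (S(t)) be a C₀-semigroup on H, let Q be a bounded self-adjoint nonnegative operator, assume ∫₀^∞ Σ_i |Q^{1/2}S(s)*e_i|² ds < ∞ for an orthonormal basis (e_i) of H, let Q∞x = ∫₀^∞ S(s)QS(s)*x ds, and let R be the unique bounded self-adjoint nonnegative operator with R² = Q∞. Then lim_{t→∞} S(t)Rx = 0 for every x ∈ H. -/

import Mathlib

/-!
Put `ρ t = ∫ₜ^∞ ‖Q^{1/2} S(u)*‖²_HS du`, a tail of the convergent integral in the hypothesis,
so `ρ t → 0`. Since `R` is self-adjoint, `‖S(t) R‖ = ‖R S(t)*‖`, and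
`‖R S(t)* y‖² = ⟪y, S(t) Q∞ S(t)* y⟫ = ∫₀^∞ ‖Q^{1/2} S(t + s)* y‖² ds ≤ ‖y‖² ρ t`
by the semigroup law and the bound of the operator norm by the Hilbert–Schmidt norm.
Hence `‖S(t) R‖ ≤ √(ρ t) → 0`: the convergence even holds in operator norm.
-/

open MeasureTheory Filter Set ContinuousLinearMap
open scoped RealInnerProductSpace ENNReal

variable {H : Type*} [NormedAddCommGroup H] [InnerProductSpace ℝ H] [CompleteSpace H]

theorem ContinuousLinearMap.opNorm_le_sqrt_of_norm_sq_le {𝕜 E F : Type*}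
    [NontriviallyNormedField 𝕜] [SeminormedAddCommGroup E] [NormedSpace 𝕜 E]
    [SeminormedAddCommGroup F] [NormedSpace 𝕜 F]
    (T : E →L[𝕜] F) {c : ℝ} (hc : 0 ≤ c) (h : ∀ x, ‖T x‖ ^ 2 ≤ c * ‖x‖ ^ 2) : ‖T‖ ≤ √c :=
  opNorm_le_bound _ (Real.sqrt_nonneg c) fun x => by
    rw [← Real.sqrt_sq (norm_nonneg x), ← Real.sqrt_mul hc]
    exact Real.le_sqrt_of_sq_le (h x)

section HilbertSchmidt

variable {ι 𝕜 E F : Type*} [RCLike 𝕜] [NormedAddCommGroup E] [InnerProductSpace 𝕜 E]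
  [NormedAddCommGroup F] [InnerProductSpace 𝕜 F]

theorem HilbertBasis.hasSum_norm_inner_sq (b : HilbertBasis ι 𝕜 E) (x : E) :
    HasSum (fun i => ‖inner 𝕜 (b i) x‖ ^ 2) (‖x‖ ^ 2) := by
  have h := lp.hasSum_norm (p := 2) (by norm_num) (b.repr x)
  simp only [ENNReal.toReal_ofNat, Real.rpow_two, LinearIsometryEquiv.norm_map] at h
  simpa only [b.repr_apply_apply] using h

variable [CompleteSpace E] [CompleteSpace F]

theorem HilbertBasis.opNorm_le_sqrt_tsum (b : HilbertBasis ι 𝕜 E) (T : E →L[𝕜] F)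
    (hT : Summable fun i => ‖T (b i)‖ ^ 2) : ‖T‖ ≤ √(∑' i, ‖T (b i)‖ ^ 2) := by
  rw [← LinearIsometryEquiv.norm_map adjoint T]
  refine opNorm_le_sqrt_of_norm_sq_le _ (tsum_nonneg fun i => sq_nonneg _) fun y => ?_
  have hparseval := b.hasSum_norm_inner_sq (adjoint T y)
  simp only [adjoint_inner_right] at hparseval
  calc ‖adjoint T y‖ ^ 2 = ∑' i, ‖inner 𝕜 (T (b i)) y‖ ^ 2 := hparseval.tsum_eq.symm
    _ ≤ ∑' i, ‖T (b i)‖ ^ 2 * ‖y‖ ^ 2 :=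
        hparseval.summable.tsum_le_tsum (fun i => by
          rw [← mul_pow]; gcongr; exact norm_inner_le_norm _ _) (hT.mul_right _)
    _ = (∑' i, ‖T (b i)‖ ^ 2) * ‖y‖ ^ 2 := tsum_mul_right

theorem HilbertBasis.enorm_apply_sq_le (b : HilbertBasis ι 𝕜 E) (T : E →L[𝕜] F) (x : E) :
    ‖T x‖ₑ ^ 2 ≤ ‖x‖ₑ ^ 2 * ∑' i, ‖T (b i)‖ₑ ^ 2 := by
  by_cases hM : ∑' i, ‖T (b i)‖ₑ ^ 2 = ∞
  · rcases eq_or_ne x 0 with rfl | hx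
    · simp
    · simp [hM, ENNReal.mul_top, hx]
  have hT : Summable fun i => ‖T (b i)‖₊ ^ 2 := by
    simpa [enorm_eq_nnnorm, ← ENNReal.coe_pow, ENNReal.tsum_coe_ne_top_iff_summable] using hM
  have hnorm := b.opNorm_le_sqrt_tsum T (by simpa using NNReal.summable_coe.mpr hT)
  have key : ‖T x‖₊ ^ 2 ≤ ‖x‖₊ ^ 2 * ∑' i, ‖T (b i)‖₊ ^ 2 := by
    rw [← NNReal.coe_le_coe]
    push_cast [NNReal.coe_tsum]
    calc ‖T x‖ ^ 2 ≤ (√(∑' i, ‖T (b i)‖ ^ 2) * ‖x‖) ^ 2 := by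
          gcongr; exact T.le_of_opNorm_le hnorm x
      _ = ‖x‖ ^ 2 * ∑' i, ‖T (b i)‖ ^ 2 := by
          rw [mul_pow, Real.sq_sqrt (tsum_nonneg fun i => sq_nonneg _), mul_comm]
  simp only [enorm_eq_nnnorm, ← ENNReal.coe_pow, ← ENNReal.coe_tsum hT, ← ENNReal.coe_mul]
  exact_mod_cast key

end HilbertSchmidt

theorem tendsto_setLIntegral_Ioi_atTop_zero {α : Type*} [LinearOrder α] [MeasurableSpace α]
    [TopologicalSpace α] [OrderClosedTopology α] [OpensMeasurableSpace α]
    [IsCountablyGenerated (atTop : Filter α)] {μ : Measure α} [SFinite μ] {f : α → ℝ≥0∞} {a : α}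
    (h : ∫⁻ s in Ioi a, f s ∂μ ≠ ∞) :
    Tendsto (fun t => ∫⁻ s in Ioi t, f s ∂μ) atTop (nhds 0) := by
  have hempty : ⋂ t : α, Ioi t = ∅ :=
    eq_empty_of_forall_notMem fun x hx => lt_irrefl x (mem_iInter.mp hx x)
  have := tendsto_measure_iInter_atTop (μ := μ.withDensity f) (s := Ioi)
    (fun t => measurableSet_Ioi.nullMeasurableSet) (fun _ _ h => Ioi_subset_Ioi h)
    ⟨a, by rwa [withDensity_apply']⟩
  simpa [Function.comp_def, withDensity_apply', hempty] using this

-- An equality when `f` is integrable; otherwise the Bochner integral is `0`.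
theorem inner_integral_le_toReal_lintegral {α : Type*} [MeasurableSpace α] {μ : Measure α}
    {f : α → H} {z : H} (hf : ∀ s, 0 ≤ ⟪z, f s⟫) :
    ⟪z, ∫ s, f s ∂μ⟫ ≤ (∫⁻ s, ENNReal.ofReal ⟪z, f s⟫ ∂μ).toReal := by
  by_cases hint : Integrable f μ
  · rw [← integral_inner hint, integral_eq_lintegral_of_nonneg_ae (.of_forall hf)
      (aestronglyMeasurable_const.inner hint.aestronglyMeasurable)]
  · rw [integral_undef hint, inner_zero_right]
    exact ENNReal.toReal_nonneg

theorem norm_sq_le_toReal_lintegral {α : Type*} [MeasurableSpace α] {μ : Measure α}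
    {S : α → H →L[ℝ] H} {P R : H →L[ℝ] H} (hP : IsSelfAdjoint P) (hR : IsSelfAdjoint R)
    {z : H} (hRz : R (R z) = ∫ s, S s (P (P (adjoint (S s) z))) ∂μ) :
    ‖R z‖ ^ 2 ≤ (∫⁻ s, ‖P (adjoint (S s) z)‖ₑ ^ 2 ∂μ).toReal := by
  have hsq : ∀ s, ⟪z, S s (P (P (adjoint (S s) z)))⟫ = ‖P (adjoint (S s) z)‖ ^ 2 := fun s => by
    simpa [hP.adjoint_eq] using (apply_norm_sq_eq_inner_adjoint_right (P ∘L adjoint (S s)) z).symm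
  have hRsq : ‖R z‖ ^ 2 = ⟪z, R (R z)⟫ := by
    simpa [hR.adjoint_eq] using apply_norm_sq_eq_inner_adjoint_right R z
  rw [hRsq, hRz]
  refine (inner_integral_le_toReal_lintegral fun s => (hsq s).ge.trans' (sq_nonneg _)).trans_eq ?_
  simp only [hsq, ← ofReal_norm, ENNReal.ofReal_pow (norm_nonneg _)]

theorem lintegral_enorm_sq_adjoint_le {ι : Type*} {S : ℝ → H →L[ℝ] H}
    (hS : ∀ s t : ℝ, 0 ≤ s → 0 ≤ t → S (s + t) = S s ∘L S t) (P : H →L[ℝ] H)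
    (b : HilbertBasis ι ℝ H) {t : ℝ} (ht : 0 ≤ t) (y : H) :
    ∫⁻ s in Ioi 0, ‖P (adjoint (S s) (adjoint (S t) y))‖ₑ ^ 2 ≤
      ‖y‖ₑ ^ 2 * ∫⁻ u in Ioi t, ∑' i, ‖P (adjoint (S u) (b i))‖ₑ ^ 2 :=
  calc ∫⁻ s in Ioi 0, ‖P (adjoint (S s) (adjoint (S t) y))‖ₑ ^ 2
      = ∫⁻ s in Ioi 0, ‖P (adjoint (S (t + s)) y)‖ₑ ^ 2 :=
        setLIntegral_congr_fun measurableSet_Ioi fun s hs => by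
          rw [hS t s ht (le_of_lt hs), adjoint_comp, comp_apply]
    _ ≤ ∫⁻ s in Ioi 0, ‖y‖ₑ ^ 2 * ∑' i, ‖P (adjoint (S (t + s)) (b i))‖ₑ ^ 2 :=
        lintegral_mono fun s => b.enorm_apply_sq_le (P ∘L adjoint (S (t + s))) y
    _ = ‖y‖ₑ ^ 2 * ∫⁻ u in Ioi t, ∑' i, ‖P (adjoint (S u) (b i))‖ₑ ^ 2 := by
        rw [lintegral_const_mul' _ _ (by simp),
          (measurePreserving_add_left volume t).setLIntegral_comp_emb
            (measurableEmbedding_addLeft t) (fun u => ∑' i, ‖P (adjoint (S u) (b i))‖ₑ ^ 2),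
          image_const_add_Ioi, add_zero]

theorem norm_comp_le_sqrt_lintegral_Ioi {ι : Type*} {S : ℝ → H →L[ℝ] H}
    (hS : ∀ s t : ℝ, 0 ≤ s → 0 ≤ t → S (s + t) = S s ∘L S t) {P R : H →L[ℝ] H}
    (hP : IsSelfAdjoint P) (hR : IsSelfAdjoint R)
    (hR2 : ∀ x, R (R x) = ∫ s in Ioi 0, S s (P (P (adjoint (S s) x))))
    (b : HilbertBasis ι ℝ H) {t : ℝ} (ht : 0 ≤ t)
    (hfin : ∫⁻ u in Ioi t, ∑' i, ‖P (adjoint (S u) (b i))‖ₑ ^ 2 ≠ ∞) :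
    ‖S t ∘L R‖ ≤ √(∫⁻ u in Ioi t, ∑' i, ‖P (adjoint (S u) (b i))‖ₑ ^ 2).toReal := by
  rw [← LinearIsometryEquiv.norm_map adjoint, adjoint_comp, hR.adjoint_eq]
  refine opNorm_le_sqrt_of_norm_sq_le _ ENNReal.toReal_nonneg fun y => ?_
  calc ‖R (adjoint (S t) y)‖ ^ 2
      ≤ (∫⁻ s in Ioi 0, ‖P (adjoint (S s) (adjoint (S t) y))‖ₑ ^ 2).toReal :=
        norm_sq_le_toReal_lintegral hP hR (hR2 _)
    _ ≤ (‖y‖ₑ ^ 2 * ∫⁻ u in Ioi t, ∑' i, ‖P (adjoint (S u) (b i))‖ₑ ^ 2).toReal :=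
        ENNReal.toReal_mono (ENNReal.mul_ne_top (by simp) hfin)
          (lintegral_enorm_sq_adjoint_le hS P b ht y)
    _ = (∫⁻ u in Ioi t, ∑' i, ‖P (adjoint (S u) (b i))‖ₑ ^ 2).toReal * ‖y‖ ^ 2 := by
        simp [mul_comm]

theorem statement3 {ι : Type*}
    (S : ℝ → H →L[ℝ] H)
    (hSadd : ∀ s t : ℝ, 0 ≤ s → 0 ≤ t → S (s + t) = (S s).comp (S t))
    (Q sqrtQ : H →L[ℝ] H)
    (hsqrt_sa : IsSelfAdjoint sqrtQ)
    (hsqrt_sq : sqrtQ.comp sqrtQ = Q)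
    -- (e_i) is an orthonormal basis of H
    (e : ι → H) (he : Orthonormal ℝ e)
    (he_tot : Dense ((Submodule.span ℝ (Set.range e) : Submodule ℝ H) : Set H))
    -- Hypothesis: ∫₀^∞ Σ_i |Q^{1/2}S(s)*e_i|² ds < ∞
    (hint : (∫⁻ s in Set.Ioi (0:ℝ),
        ∑' i : ι, (‖sqrtQ (ContinuousLinearMap.adjoint (S s) (e i))‖₊ : ℝ≥0∞) ^ 2) < ⊤)
    -- R is the (unique) bounded self-adjoint nonnegative operator with R² = Q∞
    (R : H →L[ℝ] H) (hRsa : IsSelfAdjoint R)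
    (hR2 : ∀ x : H,
      R (R x) = ∫ s in Set.Ioi (0:ℝ), S s (Q (ContinuousLinearMap.adjoint (S s) x))) :
    ∀ x : H, Filter.Tendsto (fun t : ℝ => S t (R x)) Filter.atTop (nhds 0) := by
  obtain ⟨b, rfl⟩ : ∃ b : HilbertBasis ι ℝ H, ⇑b = e :=
    ⟨_, HilbertBasis.coe_mk he (Submodule.dense_iff_topologicalClosure_eq_top.mp he_tot).ge⟩
  simp only [← hsqrt_sq, comp_apply] at hR2
  set ρ := fun t : ℝ => ∫⁻ u in Ioi t, ∑' i, ‖sqrtQ (adjoint (S u) (b i))‖ₑ ^ 2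
  have hbound : ∀ t, 0 ≤ t → ‖S t ∘L R‖ ≤ √(ρ t).toReal := fun t ht =>
    norm_comp_le_sqrt_lintegral_Ioi hSadd hsqrt_sa hRsa hR2 b ht
      (ne_top_of_le_ne_top hint.ne (lintegral_mono_set (Ioi_subset_Ioi ht)))
  have hρ_lim : Tendsto ρ atTop (nhds 0) := tendsto_setLIntegral_Ioi_atTop_zero hint.ne
  have hsqrt_lim : Tendsto (fun t => √(ρ t).toReal) atTop (nhds 0) := by
    simpa using ((ENNReal.tendsto_toReal ENNReal.zero_ne_top).comp hρ_lim).sqrt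
  have hSR : Tendsto (fun t => S t ∘L R) atTop (nhds 0) :=
    tendsto_zero_iff_norm_tendsto_zero.mpr <| squeeze_zero' (.of_forall fun t => norm_nonneg _)
      ((eventually_ge_atTop 0).mono hbound) hsqrt_lim
  intro x
  exact ((continuous_eval_const x).tendsto 0).comp hSR
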